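/- The clairvoyant baseline shift matrix Δ_i = 𝐂_{T+1}^{[1:T+1, 1:T+1]} − blkdiag(𝐂_T^{[1:T, 1:T]}, 0_{n×n}) is positive semidefinite, i.e., blkdiag(𝐂_T^{[1:T, 1:T]}, 0_{n×n}) ⪯ 𝐂_{T+1}^{[1:T+1, 1:T+1]}. (Claim established in the proof of Proposition 2.) -/

import Mathlib

open Matrix

noncomputable section

/-- Index type for stacked state / disturbance trajectories over horizon `T`:
block index in `Fin (T+1)`, coordinate in `Fin n`. -/
abbrev SIdx (n T : ℕ) := Fin (T + 1) × Fin n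

/-- Index type for stacked input trajectories over horizon `T`. -/
abbrev UIdx (m T : ℕ) := Fin T × Fin m

/-- The block-downshift operator `𝐙`. -/
def Zshift (n T : ℕ) : Matrix (SIdx n T) (SIdx n T) ℝ :=
  Matrix.of fun p q => if (p.1 : ℕ) = (q.1 : ℕ) + 1 ∧ p.2 = q.2 then (1 : ℝ) else 0

/-- `𝐀 = I_{T+1} ⊗ A`. -/
def bigA (n T : ℕ) (A : Matrix (Fin n) (Fin n) ℝ) : Matrix (SIdx n T) (SIdx n T) ℝ :=
  Matrix.of fun p q => if p.1 = q.1 then A p.2 q.2 else 0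

/-- `𝐁 = col(I_T ⊗ B, 0)`. -/
def bigB (n m T : ℕ) (B : Matrix (Fin n) (Fin m) ℝ) : Matrix (SIdx n T) (UIdx m T) ℝ :=
  Matrix.of fun p q => if (p.1 : ℕ) = (q.1 : ℕ) then B p.2 q.2 else 0

/-- `𝐐 = blkdiag(I_T ⊗ Q, 0)`. -/
def bigQ (n T : ℕ) (Q : Matrix (Fin n) (Fin n) ℝ) : Matrix (SIdx n T) (SIdx n T) ℝ :=
  Matrix.of fun p q => if p.1 = q.1 ∧ (p.1 : ℕ) < T then Q p.2 q.2 else 0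

/-- `𝐑 = I_T ⊗ R`. -/
def bigR (m T : ℕ) (R : Matrix (Fin m) (Fin m) ℝ) : Matrix (UIdx m T) (UIdx m T) ℝ :=
  Matrix.of fun p q => if p.1 = q.1 then R p.2 q.2 else 0

/-- `𝐅 = (I − 𝐙𝐀)⁻¹𝐙𝐁`. -/
def bigF (n m T : ℕ) (A : Matrix (Fin n) (Fin n) ℝ) (B : Matrix (Fin n) (Fin m) ℝ) :
    Matrix (SIdx n T) (UIdx m T) ℝ :=
  (1 - Zshift n T * bigA n T A)⁻¹ * (Zshift n T * bigB n m T B)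

/-- `𝐆 = (I − 𝐙𝐀)⁻¹`. -/
def bigG (n T : ℕ) (A : Matrix (Fin n) (Fin n) ℝ) : Matrix (SIdx n T) (SIdx n T) ℝ :=
  (1 - Zshift n T * bigA n T A)⁻¹

/-- The control cost `J_T(u, δ) = xᵀ𝐐x + uᵀ𝐑u` with `x = 𝐅u + 𝐆δ`. -/
def costJ (n m T : ℕ) (A : Matrix (Fin n) (Fin n) ℝ) (B : Matrix (Fin n) (Fin m) ℝ)
    (Q : Matrix (Fin n) (Fin n) ℝ) (R : Matrix (Fin m) (Fin m) ℝ)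
    (u : UIdx m T → ℝ) (δ : SIdx n T → ℝ) : ℝ :=
  let x := bigF n m T A B *ᵥ u + bigG n T A *ᵥ δ
  x ⬝ᵥ (bigQ n T Q *ᵥ x) + u ⬝ᵥ (bigR m T R *ᵥ u)

/-- `𝐏 = 𝐑 + 𝐅ᵀ𝐐𝐅`. -/
def bigP (n m T : ℕ) (A : Matrix (Fin n) (Fin n) ℝ) (B : Matrix (Fin n) (Fin m) ℝ)
    (Q : Matrix (Fin n) (Fin n) ℝ) (R : Matrix (Fin m) (Fin m) ℝ) :
    Matrix (UIdx m T) (UIdx m T) ℝ :=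
  bigR m T R + (bigF n m T A B)ᵀ * bigQ n T Q * bigF n m T A B

/-- The clairvoyant cost matrix `𝐂_T = 𝐆ᵀ𝐐(I + 𝐅𝐑⁻¹𝐅ᵀ𝐐)⁻¹𝐆`. -/
def Cmat (n m T : ℕ) (A : Matrix (Fin n) (Fin n) ℝ) (B : Matrix (Fin n) (Fin m) ℝ)
    (Q : Matrix (Fin n) (Fin n) ℝ) (R : Matrix (Fin m) (Fin m) ℝ) :
    Matrix (SIdx n T) (SIdx n T) ℝ :=
  (bigG n T A)ᵀ * bigQ n T Q *
    (1 + bigF n m T A B * (bigR m T R)⁻¹ * (bigF n m T A B)ᵀ * bigQ n T Q)⁻¹ * bigG n T A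

/-- Assemble `δ = col(x₀, w₀, …, w_{T−1})`. -/
def assemble (n T : ℕ) (x0 : Fin n → ℝ) (w : Fin T × Fin n → ℝ) : SIdx n T → ℝ :=
  fun p => if h : (p.1 : ℕ) = 0 then x0 p.2
    else w (⟨(p.1 : ℕ) - 1, by have := p.1.isLt; omega⟩, p.2)

/-!
`δᵀ 𝐂_L δ` is the optimal value `min_u J_L(u, δ)`: the input `u = -𝐑⁻¹𝐅ᵀ𝐐x` with
`x = (I + 𝐅𝐑⁻¹𝐅ᵀ𝐐)⁻¹𝐆δ` is a stationary point of the convex quadratic `J_L(·, δ)`, and its cost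
is `δᵀ𝐂_Lδ`. The plant is causal, so the first `T` steps of a `(T+1)`-horizon input drive the
first `T+1` states of the `(T+1)`-horizon trajectory, at a cost no larger than the whole. Hence
`𝐂_T`, padded by a zero last block, lies below `𝐂_{T+1}` in the Loewner order, and `Δ` is a
principal submatrix of the difference.
-/

open scoped Kronecker

section LinearQuadratic

variable {ι κ : Type*} [Fintype ι] [Fintype κ]

def lqCost (F : Matrix ι κ ℝ) (Q : Matrix ι ι ℝ) (R : Matrix κ κ ℝ) (u : κ → ℝ) (y : ι → ℝ) :
    ℝ :=
  (F *ᵥ u + y) ⬝ᵥ (Q *ᵥ (F *ᵥ u + y)) + u ⬝ᵥ (R *ᵥ u)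

lemma dotProduct_mulVec_comm_of_isSymm {M : Matrix ι ι ℝ} (hM : M.IsSymm) (v w : ι → ℝ) :
    v ⬝ᵥ (M *ᵥ w) = w ⬝ᵥ (M *ᵥ v) := by
  rw [dotProduct_mulVec, ← mulVec_transpose, hM.eq, dotProduct_comm]

lemma mulVec_dotProduct_eq_dotProduct_transpose_mulVec (F : Matrix ι κ ℝ) (v : κ → ℝ)
    (w : ι → ℝ) : (F *ᵥ v) ⬝ᵥ w = v ⬝ᵥ (Fᵀ *ᵥ w) := by
  rw [dotProduct_transpose_mulVec, dotProduct_comm]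

lemma dotProduct_transpose_mul_mul_mulVec (G : Matrix ι κ ℝ) (N : Matrix ι ι ℝ) (v : κ → ℝ) :
    v ⬝ᵥ ((Gᵀ * N * G) *ᵥ v) = (G *ᵥ v) ⬝ᵥ (N *ᵥ (G *ᵥ v)) := by
  rw [← mulVec_mulVec, ← mulVec_mulVec, dotProduct_transpose_mulVec, dotProduct_comm]

variable {F : Matrix ι κ ℝ} {Q : Matrix ι ι ℝ} {R : Matrix κ κ ℝ} {u : κ → ℝ} {y : ι → ℝ}

lemma lqCost_add_of_stationary (hQ : Q.IsSymm) (hR : R.IsSymm)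
    (hu : Fᵀ *ᵥ (Q *ᵥ (F *ᵥ u + y)) + R *ᵥ u = 0) (d : κ → ℝ) :
    lqCost F Q R (u + d) y = lqCost F Q R u y + lqCost F Q R d 0 := by
  have hx : F *ᵥ (u + d) + y = (F *ᵥ u + y) + F *ᵥ d := by rw [mulVec_add, add_right_comm]
  rw [lqCost, lqCost, lqCost, hx]
  set x := F *ᵥ u + y
  have hcross : (F *ᵥ d) ⬝ᵥ (Q *ᵥ x) + d ⬝ᵥ (R *ᵥ u) = 0 := by
    rw [mulVec_dotProduct_eq_dotProduct_transpose_mulVec, ← dotProduct_add, hu, dotProduct_zero]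
  simp only [add_zero, mulVec_add, dotProduct_add, add_dotProduct]
  rw [dotProduct_mulVec_comm_of_isSymm hQ x (F *ᵥ d), dotProduct_mulVec_comm_of_isSymm hR u d]
  linarith

lemma lqCost_of_stationary (hu : Fᵀ *ᵥ (Q *ᵥ (F *ᵥ u + y)) + R *ᵥ u = 0) :
    lqCost F Q R u y = y ⬝ᵥ (Q *ᵥ (F *ᵥ u + y)) := by
  have hRu : u ⬝ᵥ (R *ᵥ u) = -((F *ᵥ u) ⬝ᵥ (Q *ᵥ (F *ᵥ u + y))) := by
    rw [mulVec_dotProduct_eq_dotProduct_transpose_mulVec, eq_neg_iff_add_eq_zero,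
      ← dotProduct_add, add_comm, hu, dotProduct_zero]
  rw [lqCost, hRu, add_dotProduct]
  ring

lemma lqCost_zero_nonneg (hQ : Q.PosSemidef) (hR : R.PosSemidef) (d : κ → ℝ) :
    0 ≤ lqCost F Q R d 0 := by
  simpa only [lqCost, add_zero, star_trivial] using
    add_nonneg (hQ.dotProduct_mulVec_nonneg (F *ᵥ d)) (hR.dotProduct_mulVec_nonneg d)

variable [DecidableEq ι] [DecidableEq κ]

lemma isUnit_one_add_mul_of_posSemidef {S : Matrix ι ι ℝ} (hS : S.PosSemidef)
    (hQ : Q.PosSemidef) : IsUnit (1 + S * Q) := by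
  rw [isUnit_iff_isUnit_det, isUnit_iff_ne_zero, ne_eq, ← exists_mulVec_eq_zero_iff]
  rintro ⟨x, hx0, hx⟩
  rw [add_mulVec, one_mulVec, ← mulVec_mulVec] at hx
  -- pairing `x + S Q x = 0` with `Q x` gives `xᵀQx + (Qx)ᵀS(Qx) = 0`, a sum of two nonnegatives
  have hQx : Q *ᵥ x = 0 := by
    have hsum : x ⬝ᵥ (Q *ᵥ x) + (Q *ᵥ x) ⬝ᵥ (S *ᵥ (Q *ᵥ x)) = 0 := by
      rw [dotProduct_comm x, ← dotProduct_add, hx, dotProduct_zero]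
    have h1 := hQ.dotProduct_mulVec_nonneg x
    have h2 := hS.dotProduct_mulVec_nonneg (Q *ᵥ x)
    rw [star_trivial] at h1 h2
    rw [← hQ.dotProduct_mulVec_zero_iff, star_trivial]
    linarith
  rw [hQx, mulVec_zero, add_zero] at hx
  exact hx0 hx

omit [DecidableEq ι] in
lemma posSemidef_mul_inv_mul_transpose (hR : R.PosDef) (F : Matrix ι κ ℝ) :
    (F * R⁻¹ * Fᵀ).PosSemidef := by
  simpa [conjTranspose_eq_transpose_of_trivial] using
    hR.inv.posSemidef.mul_mul_conjTranspose_same F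

lemma isUnit_one_add_mul_inv_mul (hQ : Q.PosSemidef) (hR : R.PosDef) :
    IsUnit (1 + F * R⁻¹ * Fᵀ * Q) :=
  isUnit_one_add_mul_of_posSemidef (posSemidef_mul_inv_mul_transpose hR F) hQ

lemma isSymm_mul_inv_one_add_mul {S : Matrix ι ι ℝ} (hS : S.IsSymm) (hQ : Q.IsSymm)
    (hM : IsUnit (1 + S * Q)) : (Q * (1 + S * Q)⁻¹).IsSymm := by
  set M := 1 + S * Q
  have hdet : IsUnit M.det := (isUnit_iff_isUnit_det M).mp hM
  have hcomm : Mᵀ * Q = Q * M := by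
    simp only [M, transpose_add, transpose_one, transpose_mul, hS.eq, hQ.eq, Matrix.add_mul,
      Matrix.mul_add, Matrix.one_mul, Matrix.mul_one, Matrix.mul_assoc]
  calc (Q * M⁻¹)ᵀ = Mᵀ⁻¹ * Q := by rw [transpose_mul, transpose_nonsing_inv, hQ.eq]
    _ = Mᵀ⁻¹ * (Mᵀ * Q) * M⁻¹ := by
      rw [hcomm, Matrix.mul_assoc, Matrix.mul_assoc, mul_nonsing_inv _ hdet, Matrix.mul_one]
    _ = Q * M⁻¹ := by
      rw [← Matrix.mul_assoc, nonsing_inv_mul _ (by rwa [det_transpose]), Matrix.one_mul]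

lemma isLeast_lqCost (hQ : Q.PosSemidef) (hR : R.PosDef) (y : ι → ℝ) :
    IsLeast (Set.range fun u => lqCost F Q R u y)
      (y ⬝ᵥ ((Q * (1 + F * R⁻¹ * Fᵀ * Q)⁻¹) *ᵥ y)) := by
  set M := 1 + F * R⁻¹ * Fᵀ * Q
  set x := M⁻¹ *ᵥ y
  set u₀ := -((R⁻¹ * Fᵀ * Q) *ᵥ x)
  have hx : F *ᵥ u₀ + y = x := by
    have hMx : M *ᵥ x = y := by
      rw [mulVec_mulVec, mul_nonsing_inv _
        ((isUnit_iff_isUnit_det M).mp (isUnit_one_add_mul_inv_mul hQ hR)), one_mulVec]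
    rw [← hMx, add_mulVec, one_mulVec, mulVec_neg, mulVec_mulVec]
    simp only [Matrix.mul_assoc]
    abel
  have hu₀ : Fᵀ *ᵥ (Q *ᵥ (F *ᵥ u₀ + y)) + R *ᵥ u₀ = 0 := by
    rw [hx]
    simp only [u₀, mulVec_neg, mulVec_mulVec, ← Matrix.mul_assoc,
      mul_nonsing_inv _ ((isUnit_iff_isUnit_det R).mp hR.isUnit), Matrix.one_mul]
    exact add_neg_cancel _
  have hvalue : lqCost F Q R u₀ y = y ⬝ᵥ ((Q * M⁻¹) *ᵥ y) := by
    rw [lqCost_of_stationary hu₀, hx, mulVec_mulVec]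
  refine ⟨⟨u₀, hvalue⟩, ?_⟩
  rintro _ ⟨u, rfl⟩
  have hsplit := lqCost_add_of_stationary (isHermitian_iff_isSymm.mp hQ.isHermitian)
    (isHermitian_iff_isSymm.mp hR.isHermitian) hu₀ (u - u₀)
  rw [add_sub_cancel] at hsplit
  calc y ⬝ᵥ ((Q * M⁻¹) *ᵥ y) = lqCost F Q R u₀ y := hvalue.symm
    _ ≤ lqCost F Q R u₀ y + lqCost F Q R (u - u₀) 0 :=
      le_add_of_nonneg_right (lqCost_zero_nonneg hQ hR.posSemidef _)
    _ = lqCost F Q R u y := hsplit.symm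

end LinearQuadratic

section Truncation

variable {α β : Type*}

def truncLast {N : ℕ} (v : Fin (N + 1) × α → ℝ) : Fin N × α → ℝ :=
  fun p => v (p.1.castSucc, p.2)

def padLast {N : ℕ} (M : Matrix (Fin N × α) (Fin N × α) ℝ) :
    Matrix (Fin (N + 1) × α) (Fin (N + 1) × α) ℝ :=
  Matrix.of fun p q =>
    if h : (p.1 : ℕ) < N ∧ (q.1 : ℕ) < N then M (⟨p.1, h.1⟩, p.2) (⟨q.1, h.2⟩, q.2) else 0

lemma padLast_transpose {N : ℕ} (M : Matrix (Fin N × α) (Fin N × α) ℝ) :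
    (padLast M)ᵀ = padLast Mᵀ := by
  ext p q
  simp only [padLast, transpose_apply, of_apply]
  by_cases h : (p.1 : ℕ) < N ∧ (q.1 : ℕ) < N
  · rw [dif_pos h.symm, dif_pos h]
  · rw [dif_neg (mt And.symm h), dif_neg h]

@[simp]
lemma truncLast_add {N : ℕ} (v w : Fin (N + 1) × α → ℝ) :
    truncLast (v + w) = truncLast v + truncLast w :=
  rfl

lemma truncLast_mulVec [Fintype β] {a b : ℕ}
    (M' : Matrix (Fin (a + 1) × α) (Fin (b + 1) × β) ℝ) (M : Matrix (Fin a × α) (Fin b × β) ℝ)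
    (hM : ∀ (p : Fin a × α) (k : Fin b) j, M' (p.1.castSucc, p.2) (k.castSucc, j) = M p (k, j))
    (hlast : ∀ (p : Fin a × α) j, M' (p.1.castSucc, p.2) (Fin.last b, j) = 0)
    (v : Fin (b + 1) × β → ℝ) :
    truncLast (M' *ᵥ v) = M *ᵥ truncLast v := by
  ext p
  simp only [truncLast, mulVec, dotProduct]
  rw [Fintype.sum_prod_type, Fin.sum_univ_castSucc, Fintype.sum_prod_type]
  simp [hM, hlast]

variable [Fintype α]

lemma dotProduct_padLast_mulVec {N : ℕ} (M : Matrix (Fin N × α) (Fin N × α) ℝ)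
    (x : Fin (N + 1) × α → ℝ) :
    x ⬝ᵥ (padLast M *ᵥ x) = truncLast x ⬝ᵥ (M *ᵥ truncLast x) := by
  simp only [dotProduct, mulVec, padLast, of_apply, truncLast]
  rw [Fintype.sum_prod_type, Fin.sum_univ_castSucc, Fintype.sum_prod_type]
  simp [Fintype.sum_prod_type, Fin.sum_univ_castSucc]

lemma dotProduct_kronecker_diagonal_mulVec {N : ℕ} (d : Fin N → ℝ) (Q : Matrix α α ℝ)
    (x : Fin N × α → ℝ) :
    x ⬝ᵥ ((diagonal d ⊗ₖ Q) *ᵥ x) =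
      ∑ k, d k * ((fun i => x (k, i)) ⬝ᵥ (Q *ᵥ fun i => x (k, i))) := by
  simp only [dotProduct, mulVec, Fintype.sum_prod_type, kroneckerMap_apply, diagonal_apply,
    ite_mul, zero_mul, Finset.sum_ite_irrel, Finset.sum_const_zero, Finset.sum_ite_eq,
    Finset.mem_univ, if_true, Finset.mul_sum]
  refine Finset.sum_congr rfl fun _ _ => Finset.sum_congr rfl fun _ _ =>
    Finset.sum_congr rfl fun _ _ => by ring

lemma dotProduct_kronecker_diagonal_mulVec_truncLast_le {N : ℕ} {Q : Matrix α α ℝ}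
    (hQ : Q.PosSemidef) (d : Fin N → ℝ) (d' : Fin (N + 1) → ℝ)
    (hd : ∀ k, d k ≤ d' k.castSucc) (hd' : 0 ≤ d') (x : Fin (N + 1) × α → ℝ) :
    truncLast x ⬝ᵥ ((diagonal d ⊗ₖ Q) *ᵥ truncLast x) ≤ x ⬝ᵥ ((diagonal d' ⊗ₖ Q) *ᵥ x) := by
  have hq : ∀ k, 0 ≤ (fun i => x (k, i)) ⬝ᵥ (Q *ᵥ fun i => x (k, i)) := fun k => by
    simpa only [star_trivial] using hQ.dotProduct_mulVec_nonneg _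
  rw [dotProduct_kronecker_diagonal_mulVec, dotProduct_kronecker_diagonal_mulVec,
    Fin.sum_univ_castSucc]
  exact le_add_of_le_of_nonneg
    (Finset.sum_le_sum fun k _ => mul_le_mul_of_nonneg_right (hd k) (hq k.castSucc))
    (mul_nonneg (hd' _) (hq _))

end Truncation

section Plant

variable {n m L : ℕ} (A : Matrix (Fin n) (Fin n) ℝ) (B : Matrix (Fin n) (Fin m) ℝ)
  (Q : Matrix (Fin n) (Fin n) ℝ) (R : Matrix (Fin m) (Fin m) ℝ)

lemma Zshift_mul_apply {κ : Type*} [Fintype κ] (M : Matrix (SIdx n L) κ ℝ) (p : SIdx n L)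
    (q : κ) :
    (Zshift n L * M) p q = ∑ k : Fin (L + 1), if (p.1 : ℕ) = k + 1 then M (k, p.2) q else 0 := by
  simp [mul_apply, Fintype.sum_prod_type, Zshift, ite_and]

lemma Zshift_mul_bigA_apply (p q : SIdx n L) :
    (Zshift n L * bigA n L A) p q = if (p.1 : ℕ) = (q.1 : ℕ) + 1 then A p.2 q.2 else 0 := by
  rw [Zshift_mul_apply, Finset.sum_eq_single q.1 (fun k _ hk => by simp [bigA, hk]) (by simp)]
  simp [bigA]

lemma Zshift_mul_bigB_apply (p : SIdx n L) (q : UIdx m L) :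
    (Zshift n L * bigB n m L B) p q = if (p.1 : ℕ) = (q.1 : ℕ) + 1 then B p.2 q.2 else 0 := by
  rw [Zshift_mul_apply, Finset.sum_eq_single q.1.castSucc
    (fun k _ hk => by simp [bigB, Fin.ext_iff] at hk ⊢; simp [hk]) (by simp)]
  simp [bigB]

lemma Zshift_mul_bigA_pow_apply_eq_zero (k : ℕ) (p q : SIdx n L) (h : (p.1 : ℕ) ≠ q.1 + k) :
    ((Zshift n L * bigA n L A) ^ k) p q = 0 := by
  induction k generalizing p with
  | zero => exact one_apply_ne fun hpq => h (by rw [hpq, add_zero])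
  | succ k ih =>
    rw [pow_succ', mul_apply]
    refine Finset.sum_eq_zero fun r _ => ?_
    rw [Zshift_mul_bigA_apply]
    split_ifs with hr
    · rw [ih r (by omega), mul_zero]
    · rw [zero_mul]

lemma isUnit_one_sub_Zshift_mul_bigA : IsUnit (1 - Zshift n L * bigA n L A) :=
  IsNilpotent.isUnit_one_sub ⟨L + 1, by
    ext p q
    exact Zshift_mul_bigA_pow_apply_eq_zero A (L + 1) p q (by have := p.1.isLt; omega)⟩

lemma eq_bigF_mulVec_add_bigG_mulVec_iff (u : UIdx m L → ℝ) (δ x : SIdx n L → ℝ) :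
    x = bigF n m L A B *ᵥ u + bigG n L A *ᵥ δ ↔
      x = (Zshift n L * bigA n L A) *ᵥ x + ((Zshift n L * bigB n m L B) *ᵥ u + δ) := by
  set N := 1 - Zshift n L * bigA n L A
  set w := (Zshift n L * bigB n m L B) *ᵥ u + δ
  have hN : IsUnit N.det := (isUnit_iff_isUnit_det N).mp (isUnit_one_sub_Zshift_mul_bigA A)
  have hFG : bigF n m L A B *ᵥ u + bigG n L A *ᵥ δ = N⁻¹ *ᵥ w := by
    rw [bigF, bigG, mulVec_add, ← mulVec_mulVec]
  have hNx : N *ᵥ x = x - (Zshift n L * bigA n L A) *ᵥ x := by rw [sub_mulVec, one_mulVec]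
  rw [hFG, ← sub_eq_iff_eq_add', ← hNx]
  constructor
  · rintro rfl
    rw [mulVec_mulVec, mul_nonsing_inv _ hN, one_mulVec]
  · rintro hx
    rw [← hx, mulVec_mulVec, nonsing_inv_mul _ hN, one_mulVec]

lemma truncLast_bigF_mulVec_add_bigG_mulVec {T : ℕ} (u : UIdx m (T + 1) → ℝ)
    (δ : SIdx n (T + 1) → ℝ) :
    truncLast (bigF n m (T + 1) A B *ᵥ u + bigG n (T + 1) A *ᵥ δ) =
      bigF n m T A B *ᵥ truncLast u + bigG n T A *ᵥ truncLast δ := by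
  set x := bigF n m (T + 1) A B *ᵥ u + bigG n (T + 1) A *ᵥ δ
  have hx := (eq_bigF_mulVec_add_bigG_mulVec_iff A B u δ x).mp rfl
  rw [eq_bigF_mulVec_add_bigG_mulVec_iff]
  calc truncLast x
      = truncLast ((Zshift n (T + 1) * bigA n (T + 1) A) *ᵥ x +
          ((Zshift n (T + 1) * bigB n m (T + 1) B) *ᵥ u + δ)) := congrArg truncLast hx
    _ = _ := by
      rw [truncLast_add, truncLast_add,
        truncLast_mulVec _ (Zshift n T * bigA n T A) (by simp [Zshift_mul_bigA_apply])
          (by simp [Zshift_mul_bigA_apply]; omega),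
        truncLast_mulVec _ (Zshift n T * bigB n m T B) (by simp [Zshift_mul_bigB_apply])
          (by simp [Zshift_mul_bigB_apply]; omega)]

lemma bigQ_eq_kronecker :
    bigQ n L Q = diagonal (fun k : Fin (L + 1) => if (k : ℕ) < L then 1 else 0) ⊗ₖ Q := by
  ext p q
  simp [bigQ, diagonal_apply, ite_and]

lemma bigR_eq_kronecker : bigR m L R = 1 ⊗ₖ R := by
  ext p q
  simp [bigR, one_apply]

variable {Q R}

lemma bigQ_posSemidef (hQ : Q.PosSemidef) : (bigQ n L Q).PosSemidef := by
  rw [bigQ_eq_kronecker]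
  exact (PosSemidef.diagonal fun k => by dsimp; split_ifs <;> norm_num).kronecker hQ

lemma bigR_posDef (hR : R.PosDef) : (bigR m L R).PosDef := by
  rw [bigR_eq_kronecker]
  exact PosDef.one.kronecker hR

lemma costJ_truncLast_le {T : ℕ} (hQ : Q.PosSemidef) (hR : R.PosDef)
    (u : UIdx m (T + 1) → ℝ) (δ : SIdx n (T + 1) → ℝ) :
    costJ n m T A B Q R (truncLast u) (truncLast δ) ≤ costJ n m (T + 1) A B Q R u δ := by
  simp only [costJ, ← truncLast_bigF_mulVec_add_bigG_mulVec]
  rw [bigQ_eq_kronecker, bigQ_eq_kronecker, bigR_eq_kronecker, bigR_eq_kronecker, ← diagonal_one,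
    ← diagonal_one]
  gcongr ?_ + ?_
  · exact dotProduct_kronecker_diagonal_mulVec_truncLast_le hQ _ _
      (fun k => by simp only [Fin.val_castSucc]; split_ifs <;> norm_num; omega)
      (fun k => by dsimp; split_ifs <;> norm_num) _
  · exact dotProduct_kronecker_diagonal_mulVec_truncLast_le hR.posSemidef _ _
      (fun _ => le_rfl) (fun _ => zero_le_one) _

lemma Cmat_eq : Cmat n m L A B Q R = (bigG n L A)ᵀ *
    (bigQ n L Q * (1 + bigF n m L A B * (bigR m L R)⁻¹ * (bigF n m L A B)ᵀ * bigQ n L Q)⁻¹) *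
      bigG n L A := by
  simp only [Cmat, Matrix.mul_assoc]

lemma isSymm_Cmat (hQ : Q.PosSemidef) (hR : R.PosDef) : (Cmat n m L A B Q R).IsSymm := by
  have hQ' := bigQ_posSemidef (n := n) (L := L) hQ
  have hR' := bigR_posDef (m := m) (L := L) hR
  have hsymm := isSymm_mul_inv_one_add_mul
    (isHermitian_iff_isSymm.mp
      (posSemidef_mul_inv_mul_transpose hR' (bigF n m L A B)).isHermitian)
    (isHermitian_iff_isSymm.mp hQ'.isHermitian) (isUnit_one_add_mul_inv_mul hQ' hR')
  rw [IsSymm, Cmat_eq, transpose_mul, transpose_mul, transpose_transpose, hsymm.eq]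
  simp only [Matrix.mul_assoc]

lemma isLeast_costJ (hQ : Q.PosSemidef) (hR : R.PosDef) (δ : SIdx n L → ℝ) :
    IsLeast (Set.range fun u => costJ n m L A B Q R u δ) (δ ⬝ᵥ (Cmat n m L A B Q R *ᵥ δ)) := by
  rw [Cmat_eq, dotProduct_transpose_mul_mul_mulVec]
  exact isLeast_lqCost (bigQ_posSemidef hQ) (bigR_posDef hR) _

lemma posSemidef_Cmat_succ_sub_padLast {T : ℕ} (hQ : Q.PosSemidef) (hR : R.PosDef) :
    (Cmat n m (T + 1) A B Q R - padLast (Cmat n m T A B Q R)).PosSemidef := by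
  refine posSemidef_iff_dotProduct_mulVec.mpr ⟨?_, fun x => ?_⟩
  · rw [isHermitian_iff_isSymm, IsSymm, transpose_sub, padLast_transpose,
      (isSymm_Cmat A B hQ hR).eq, (isSymm_Cmat A B hQ hR).eq]
  · obtain ⟨⟨u, hu⟩, -⟩ := isLeast_costJ A B hQ hR x
    rw [star_trivial, sub_mulVec, dotProduct_sub, dotProduct_padLast_mulVec, sub_nonneg, ← hu]
    exact ((isLeast_costJ A B hQ hR _).2 ⟨truncLast u, rfl⟩).trans
      (costJ_truncLast_le A B hQ hR u x)

end Plant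

/-- Claim in the proof of Proposition 2: the clairvoyant baseline shift matrix
`Δ_i = 𝐂_{T+1}^{[1:T+1, 1:T+1]} − blkdiag(𝐂_T^{[1:T, 1:T]}, 0)` is positive semidefinite. -/
theorem stmt12 (n m T : ℕ)
    (A : Matrix (Fin n) (Fin n) ℝ) (B : Matrix (Fin n) (Fin m) ℝ)
    (Q : Matrix (Fin n) (Fin n) ℝ) (R : Matrix (Fin m) (Fin m) ℝ)
    (hQ : Q.PosSemidef) (hR : R.PosDef) :
    ∀ D : Matrix (SIdx n T) (SIdx n T) ℝ,
      (D = Matrix.of fun p q =>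
        if h : (p.1 : ℕ) < T ∧ (q.1 : ℕ) < T then
          Cmat n m T A B Q R (⟨(p.1 : ℕ) + 1, by omega⟩, p.2) (⟨(q.1 : ℕ) + 1, by omega⟩, q.2)
        else 0) →
      ((Cmat n m (T + 1) A B Q R).submatrix
          (fun p : SIdx n T => ((p.1.succ : Fin (T + 2)), p.2))
          (fun p : SIdx n T => ((p.1.succ : Fin (T + 2)), p.2)) - D).PosSemidef := by
  rintro D rfl
  convert (posSemidef_Cmat_succ_sub_padLast A B hQ hR).submatrix
    (fun p : SIdx n T => ((p.1.succ : Fin (T + 2)), p.2)) using 1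
  ext p q
  simp [padLast]

end
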